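/- Let (a_n)_{n ≥ 0} be an absolutely summable sequence of real numbers, extend it by a_{−n} := a_n, and let f(t) = Σ_{n=−∞}^∞ a_n e^{int} = a_0 + 2 Σ_{n=1}^∞ a_n cos(nt) for t ∈ [0, 2π]. Then f is real-valued, and for every integer n ≥ 0 and every eigenvalue λ of the real symmetric (n+1) × (n+1) Toeplitz matrix A_n with entries (A_n)_{i,j} = a_{|i−j|}, one has min_{t ∈ [0,2π]} f(t) ≤ λ ≤ max_{t ∈ [0,2π]} f(t). -/

import Mathlib

/-- The real-valued Fourier series `f(t) = a_0 + 2 Σ_{n≥1} a_n cos(nt)` associated to a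
sequence `(a_n)` extended by `a_{-n} = a_n`. -/
noncomputable def fourierF (a : ℕ → ℝ) (t : ℝ) : ℝ :=
  a 0 + 2 * ∑' n : ℕ, a (n + 1) * Real.cos ((n + 1) * t)

/-- The real symmetric `(n+1) × (n+1)` Toeplitz matrix with `(i,j)` entry `a_{|i-j|}`. -/
noncomputable def toeplitz (a : ℕ → ℝ) (n : ℕ) : Matrix (Fin (n + 1)) (Fin (n + 1)) ℝ :=
  fun i j => a ((i : ℤ) - (j : ℤ)).natAbs

open Real MeasureTheory intervalIntegral

lemma integral_cos_int_mul (c : ℤ) :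
    ∫ t in (0:ℝ)..(2*π), Real.cos (c * t) = if c = 0 then 2*π else 0 := by
  by_cases hc : c = 0
  · simp [hc]
  · simp only [hc, if_false]
    have h : ((c:ℝ)) ≠ 0 := Int.cast_ne_zero.2 hc
    rw [intervalIntegral.integral_comp_mul_left Real.cos h]
    rw [integral_cos]
    have h2 : (c:ℝ) * (2*π) = ((2*c : ℤ):ℝ) * π := by push_cast; ring
    rw [mul_zero, h2, Real.sin_int_mul_pi]
    simp

lemma integral_cos_mul_cos_int (j k : ℤ) :
    ∫ t in (0:ℝ)..(2*π), Real.cos (j*t) * Real.cos (k*t)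
      = (if j - k = 0 then 2*π else 0)/2 + (if j + k = 0 then 2*π else 0)/2 := by
  have hpt : ∀ t:ℝ, Real.cos (j*t) * Real.cos (k*t)
      = Real.cos (((j-k:ℤ):ℝ)*t)/2 + Real.cos (((j+k:ℤ):ℝ)*t)/2 := by
    intro t; push_cast; rw [sub_mul, add_mul, Real.cos_sub, Real.cos_add]; ring
  have hcont : ∀ c : ℤ, Continuous fun t : ℝ => Real.cos ((c:ℝ)*t) := fun c =>
    Real.continuous_cos.comp (continuous_const.mul continuous_id)
  simp only [hpt]
  rw [intervalIntegral.integral_add (((hcont (j-k)).div_const 2).intervalIntegrable _ _)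
      (((hcont (j+k)).div_const 2).intervalIntegrable _ _),
    intervalIntegral.integral_div, intervalIntegral.integral_div,
    integral_cos_int_mul, integral_cos_int_mul]


lemma continuous_fourier_tail (a : ℕ → ℝ) (ha : Summable fun n => |a n|) :
    Continuous fun t : ℝ => ∑' n : ℕ, a (n + 1) * Real.cos ((n + 1) * t) := by
  apply continuous_tsum (u := fun n => |a (n+1)|)
  · intro i; fun_prop
  · exact (summable_nat_add_iff 1).2 ha
  · intro n t
    rw [Real.norm_eq_abs, abs_mul]
    calc |a (n+1)| * |Real.cos (((n:ℝ)+1)*t)| ≤ |a (n+1)| * 1 := by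
          gcongr; exact Real.abs_cos_le_one _
    _ = |a (n+1)| := mul_one _

lemma continuous_fourierF (a : ℕ → ℝ) (ha : Summable fun n => |a n|) :
    Continuous (fourierF a) :=
  continuous_const.add (continuous_const.mul (continuous_fourier_tail a ha))

lemma fourierF_coeff (a : ℕ → ℝ) (ha : Summable fun n => |a n|) (m : ℤ) :
    ∫ t in (0:ℝ)..(2*π), fourierF a t * Real.cos ((m:ℝ)*t) = 2*π * a m.natAbs := by
  have hle : (0:ℝ) ≤ 2*π := by positivity
  have ha' : Summable fun n => |a (n+1)| := (summable_nat_add_iff 1).2 ha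
  set F : ℕ → ℝ → ℝ := fun i t => a (i+1) * Real.cos (((i:ℝ)+1)*t) * Real.cos ((m:ℝ)*t) with hF
  have hFc : ∀ i, Continuous (F i) := by intro i; rw [hF]; fun_prop
  have hnorm : ∀ i t, ‖F i t‖ ≤ |a (i+1)| := by
    intro i t
    rw [hF, Real.norm_eq_abs, abs_mul, abs_mul]
    calc |a (i+1)| * |Real.cos (((i:ℝ)+1)*t)| * |Real.cos ((m:ℝ)*t)| ≤ |a (i+1)| * 1 * 1 := by
          gcongr <;> exact Real.abs_cos_le_one _
    _ = |a (i+1)| := by ring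
  have hint : ∀ i, Integrable (F i) (volume.restrict (Set.Ioc (0:ℝ) (2*π))) := fun i =>
    (hFc i).integrableOn_Ioc
  have hsum : Summable fun i => ∫ t, ‖F i t‖ ∂(volume.restrict (Set.Ioc (0:ℝ) (2*π))) := by
    apply Summable.of_nonneg_of_le (fun i => integral_nonneg fun t => norm_nonneg _)
      (fun i => ?_) (ha'.mul_right (2*π))
    calc (∫ t, ‖F i t‖ ∂(volume.restrict (Set.Ioc (0:ℝ) (2*π))))
        ≤ ∫ _t, |a (i+1)| ∂(volume.restrict (Set.Ioc (0:ℝ) (2*π))) :=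
          integral_mono (hint i).norm (integrable_const _) (hnorm i)
      _ = |a (i+1)| * (2*π) := by
          rw [MeasureTheory.setIntegral_const]
          simp [Real.volume_Ioc, ENNReal.toReal_ofReal hle, mul_comm]
          exact Or.inl Real.pi_nonneg
  have hswap := MeasureTheory.integral_tsum_of_summable_integral_norm hint hsum
  have hTc : Continuous fun t => ∑' i, F i t := continuous_tsum hFc ha' hnorm
  -- pointwise rewriting of the integrand
  have hpt : ∀ t : ℝ, fourierF a t * Real.cos ((m:ℝ)*t)
      = a 0 * Real.cos ((m:ℝ)*t) + 2 * ∑' i, F i t := by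
    intro t
    rw [fourierF, add_mul, mul_assoc, ← tsum_mul_right]
  have hval : ∀ i, (∫ t, F i t ∂(volume.restrict (Set.Ioc (0:ℝ) (2*π))))
      = a (i+1) * ((if ((i:ℤ)+1) - m = 0 then 2*π else 0)/2
          + (if ((i:ℤ)+1) + m = 0 then 2*π else 0)/2) := by
    intro i
    rw [← intervalIntegral.integral_of_le hle]
    have : ∀ t : ℝ, F i t = a (i+1) * (Real.cos ((((i:ℤ)+1 : ℤ):ℝ)*t) * Real.cos ((m:ℝ)*t)) := by
      intro t; rw [hF]; push_cast; ring
    simp only [this]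
    rw [intervalIntegral.integral_const_mul, integral_cos_mul_cos_int]
  have key : (∫ t in (0:ℝ)..(2*π), fourierF a t * Real.cos ((m:ℝ)*t))
      = a 0 * (if m = 0 then 2*π else 0) + 2 * ∑' i, (∫ t, F i t ∂(volume.restrict (Set.Ioc (0:ℝ) (2*π)))) := by
    simp only [hpt]
    rw [intervalIntegral.integral_add
        (((by fun_prop : Continuous fun t : ℝ => a 0 * Real.cos ((m:ℝ)*t))).intervalIntegrable _ _)
        ((by exact continuous_const.mul hTc : Continuous fun t : ℝ => 2 * ∑' i, F i t).intervalIntegrable _ _),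
      intervalIntegral.integral_const_mul, intervalIntegral.integral_const_mul,
      integral_cos_int_mul m, intervalIntegral.integral_of_le hle, ← hswap]
  rw [key]
  rcases eq_or_ne m 0 with hm | hm
  · subst hm
    have : ∀ i : ℕ, (∫ t, F i t ∂(volume.restrict (Set.Ioc (0:ℝ) (2*π)))) = 0 := by
      intro i
      rw [hval i]
      have h1 : ((i:ℤ)+1) - 0 ≠ 0 := by omega
      have h2 : ((i:ℤ)+1) + 0 ≠ 0 := by omega
      rw [if_neg h1, if_neg h2]; ring
    simp only [this, tsum_zero, if_pos rfl]
    simp [mul_comm]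
  · have hfun : (fun i : ℕ => (∫ t, F i t ∂(volume.restrict (Set.Ioc (0:ℝ) (2*π)))))
        = fun i => if i = m.natAbs - 1 then a m.natAbs * π else 0 := by
      funext i
      rw [hval i]
      by_cases h1 : ((i:ℤ)+1) - m = 0
      · have h2 : ((i:ℤ)+1) + m ≠ 0 := by omega
        have hi : i = m.natAbs - 1 := by omega
        have hi2 : i + 1 = m.natAbs := by omega
        rw [if_pos h1, if_neg h2, if_pos hi, ← hi2]; ring
      · by_cases h2 : ((i:ℤ)+1) + m = 0
        · have hi : i = m.natAbs - 1 := by omega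
          have hi2 : i + 1 = m.natAbs := by omega
          rw [if_neg h1, if_pos h2, if_pos hi, ← hi2]; ring
        · have hi : i ≠ m.natAbs - 1 := by omega
          rw [if_neg h1, if_neg h2, if_neg hi]; ring
    rw [hfun, tsum_ite_eq, if_neg hm]
    ring


/-- If `(a_n)` is absolutely summable, then every eigenvalue `μ` of the Toeplitz matrix
`A_n = (a_{|i-j|})` satisfies `min_{[0,2π]} f ≤ μ ≤ max_{[0,2π]} f`, where
`f(t) = a_0 + 2 Σ a_n cos(nt)`. -/
theorem toeplitz_eigenvalue_bounds (a : ℕ → ℝ) (ha : Summable fun n => |a n|)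
    (n : ℕ) (μ : ℝ)
    (hμ : Module.End.HasEigenvalue (Matrix.toLin' (toeplitz a n)) μ) :
    sInf (fourierF a '' Set.Icc 0 (2 * Real.pi)) ≤ μ ∧
      μ ≤ sSup (fourierF a '' Set.Icc 0 (2 * Real.pi)) := by
  have hle : (0:ℝ) ≤ 2*π := by positivity
  have hfc := continuous_fourierF a ha
  obtain ⟨x, hx⟩ := hμ.exists_hasEigenvector
  have heig : (toeplitz a n).mulVec x = μ • x := by
    have h := hx.apply_eq_smul
    rwa [Matrix.toLin'_apply] at h
  set S : ℝ := ∑ j, x j ^ 2 with hSdef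
  have hS0 : 0 < S := by
    have hxne := hx.right
    obtain ⟨j, hj⟩ : ∃ j, x j ≠ 0 := by
      by_contra h
      push_neg at h
      exact hxne (funext h)
    exact Finset.sum_pos' (fun i _ => sq_nonneg _) ⟨j, Finset.mem_univ j, by positivity⟩
  -- the nonnegative weight function
  set g : ℝ → ℝ := fun t =>
    (∑ j, x j * Real.cos ((j:ℝ) * t))^2 + (∑ j, x j * Real.sin ((j:ℝ) * t))^2 with hgdef
  have hg0 : ∀ t, 0 ≤ g t := fun t => by positivity
  have hgc : Continuous g := by
    rw [hgdef]; fun_prop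
  have hg_expand : ∀ t, g t
      = ∑ j, ∑ k, x j * x k * Real.cos ((((j:ℤ) - (k:ℤ) : ℤ):ℝ) * t) := by
    intro t
    rw [hgdef]
    simp only [sq, Finset.sum_mul_sum, ← Finset.sum_add_distrib]
    refine Finset.sum_congr rfl fun j _ => Finset.sum_congr rfl fun k _ => ?_
    push_cast
    rw [sub_mul, Real.cos_sub]
    ring
  -- ∫ g = 2π S
  have hIg : ∫ t in (0:ℝ)..(2*π), g t = 2*π * S := by
    simp only [hg_expand]
    rw [intervalIntegral.integral_finset_sum
        (fun j _ => (continuous_finset_sum _ (fun k _ => by fun_prop)).intervalIntegrable _ _)]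
    have hinner : ∀ j : Fin (n+1), (∫ t in (0:ℝ)..(2*π),
        ∑ k, x j * x k * Real.cos ((((j:ℤ) - (k:ℤ) : ℤ):ℝ) * t)) = x j * x j * (2*π) := by
      intro j
      rw [intervalIntegral.integral_finset_sum (fun k _ => (by fun_prop : Continuous fun t : ℝ =>
        x j * x k * Real.cos ((((j:ℤ) - (k:ℤ) : ℤ):ℝ) * t)).intervalIntegrable _ _)]
      have hterm : ∀ k : Fin (n+1), (∫ t in (0:ℝ)..(2*π),
          x j * x k * Real.cos ((((j:ℤ) - (k:ℤ) : ℤ):ℝ) * t))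
          = if k = j then x j * x j * (2*π) else 0 := by
        intro k
        rw [intervalIntegral.integral_const_mul, integral_cos_int_mul]
        by_cases hkj : k = j
        · subst hkj; simp
        · have : ((j:ℤ) - (k:ℤ)) ≠ 0 := by
            intro h
            exact hkj (Fin.ext (by omega))
          rw [if_neg this, if_neg hkj, mul_zero]
      simp only [hterm, Finset.sum_ite_eq', Finset.mem_univ, if_pos]
    simp only [hinner, hSdef]
    rw [Finset.mul_sum]
    exact Finset.sum_congr rfl fun j _ => by ring
  -- ∫ f g = 2π μ S
  have hIfg : ∫ t in (0:ℝ)..(2*π), fourierF a t * g t = 2*π * (μ * S) := by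
    have hpt : ∀ t, fourierF a t * g t = ∑ j, ∑ k,
        x j * x k * (fourierF a t * Real.cos ((((j:ℤ) - (k:ℤ) : ℤ):ℝ) * t)) := by
      intro t
      rw [hg_expand t, Finset.mul_sum]
      refine Finset.sum_congr rfl fun j _ => ?_
      rw [Finset.mul_sum]
      exact Finset.sum_congr rfl fun k _ => by ring
    simp only [hpt]
    rw [intervalIntegral.integral_finset_sum
        (fun j _ => (continuous_finset_sum _ (fun k _ => by fun_prop)).intervalIntegrable _ _)]
    have hinner2 : ∀ j : Fin (n+1), (∫ t in (0:ℝ)..(2*π),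
        ∑ k, x j * x k * (fourierF a t * Real.cos ((((j:ℤ) - (k:ℤ) : ℤ):ℝ) * t)))
        = ∑ k, x j * x k * (2*π * a ((j:ℤ) - (k:ℤ)).natAbs) := by
      intro j
      rw [intervalIntegral.integral_finset_sum (fun k _ =>
        (by exact continuous_const.mul (hfc.mul (by fun_prop : Continuous fun t : ℝ => Real.cos ((((j:ℤ) - (k:ℤ) : ℤ):ℝ) * t))) :
          Continuous fun t : ℝ => x j * x k * (fourierF a t * Real.cos ((((j:ℤ) - (k:ℤ) : ℤ):ℝ) * t))).intervalIntegrable _ _)]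
      exact Finset.sum_congr rfl fun k _ => by
        rw [intervalIntegral.integral_const_mul, fourierF_coeff a ha ((j:ℤ) - (k:ℤ))]
    simp only [hinner2]
    -- use the eigenvalue equation
    have hrow : ∀ j : Fin (n+1), (∑ k : Fin (n+1), a ((j:ℤ) - (k:ℤ)).natAbs * x k) = μ * x j := by
      intro j
      have h := congrFun heig j
      simpa [Matrix.mulVec, dotProduct, toeplitz] using h
    calc (∑ j, ∑ k, x j * x k * (2*π * a ((j:ℤ) - (k:ℤ)).natAbs))
        = ∑ j, (2*π) * (x j * ∑ k : Fin (n+1), a ((j:ℤ) - (k:ℤ)).natAbs * x k) := by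
          refine Finset.sum_congr rfl fun j _ => ?_
          rw [Finset.mul_sum, Finset.mul_sum]
          exact Finset.sum_congr rfl fun k _ => by ring
      _ = ∑ j, (2*π) * (μ * x j ^ 2) := by
          refine Finset.sum_congr rfl fun j _ => ?_
          rw [hrow j]; ring
      _ = 2*π * (μ * S) := by
          rw [hSdef, Finset.mul_sum, Finset.mul_sum]
  -- conclude via monotonicity of the integral
  have hcomp : IsCompact (fourierF a '' Set.Icc 0 (2*π)) := isCompact_Icc.image hfc
  have hS2 : (0:ℝ) < 2*π*S := by positivity
  constructor
  · have hlb : ∀ t ∈ Set.Icc (0:ℝ) (2*π), sInf (fourierF a '' Set.Icc 0 (2 * π)) ≤ fourierF a t :=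
      fun t ht => csInf_le hcomp.bddBelow ⟨t, ht, rfl⟩
    have h1 : (∫ t in (0:ℝ)..(2*π), sInf (fourierF a '' Set.Icc 0 (2 * π)) * g t)
        ≤ ∫ t in (0:ℝ)..(2*π), fourierF a t * g t :=
      intervalIntegral.integral_mono_on hle
        ((continuous_const.mul hgc).intervalIntegrable _ _)
        ((hfc.mul hgc).intervalIntegrable _ _)
        (fun t ht => mul_le_mul_of_nonneg_right (hlb t ht) (hg0 t))
    rw [hIfg, intervalIntegral.integral_const_mul, hIg] at h1
    nlinarith [h1, hS2]
  · have hub : ∀ t ∈ Set.Icc (0:ℝ) (2*π), fourierF a t ≤ sSup (fourierF a '' Set.Icc 0 (2 * π)) :=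
      fun t ht => le_csSup hcomp.bddAbove ⟨t, ht, rfl⟩
    have h1 : (∫ t in (0:ℝ)..(2*π), fourierF a t * g t)
        ≤ ∫ t in (0:ℝ)..(2*π), sSup (fourierF a '' Set.Icc 0 (2 * π)) * g t :=
      intervalIntegral.integral_mono_on hle
        ((hfc.mul hgc).intervalIntegrable _ _)
        ((continuous_const.mul hgc).intervalIntegrable _ _)
        (fun t ht => mul_le_mul_of_nonneg_right (hub t ht) (hg0 t))
    rw [hIfg, intervalIntegral.integral_const_mul, hIg] at h1
    nlinarith [h1, hS2]
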